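/- For any small category X and any H, K : Xᵒᵖ × X ⥤ Type, the set of morphisms in Cat/X from the diagonal extension i_X H to the diagonal extension i_X K (functors over X commuting with the projections) is in bijection with the set of strongly dinatural transformations from H to K, i.e. families of functions α_x : H(x,x) → K(x,x) (one for each object x) such that for every λ : x → y, a ∈ H(x,x) and b ∈ H(y,y) with H(id_x, λ)(a) = H(λ, id_y)(b), one has K(id_x, λ)(α_x(a)) = K(λ, id_y)(α_y(b)). -/

import Mathlib

open CategoryTheory Opposite

universe u

section
variable {X : Type u} [Category.{u} X] (H : Xᵒᵖ × X ⥤ Type u)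

lemma mapSnd_comp {x : Xᵒᵖ} {y y' y'' : X} (v : y ⟶ y') (w : y' ⟶ y'')
    (z : H.obj (x, y)) :
    H.map ((𝟙 x, v ≫ w) : (x, y) ⟶ (x, y'')) z =
      H.map ((𝟙 x, w) : (x, y') ⟶ (x, y'')) (H.map ((𝟙 x, v) : (x, y) ⟶ (x, y')) z) := by
  have h : @Eq ((x, y) ⟶ (x, y'')) (𝟙 x, v ≫ w)
      (((𝟙 x, v) : (x, y) ⟶ (x, y')) ≫ ((𝟙 x, w) : (x, y') ⟶ (x, y''))) :=
    Prod.hom_ext (by simp) (by simp)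
  rw [h, FunctorToTypes.map_comp_apply]

lemma mapFst_comp {x x' x'' : Xᵒᵖ} {y : X} (u : x ⟶ x') (u' : x' ⟶ x'')
    (z : H.obj (x, y)) :
    H.map ((u ≫ u', 𝟙 y) : (x, y) ⟶ (x'', y)) z =
      H.map ((u', 𝟙 y) : (x', y) ⟶ (x'', y)) (H.map ((u, 𝟙 y) : (x, y) ⟶ (x', y)) z) := by
  have h : @Eq ((x, y) ⟶ (x'', y)) (u ≫ u', 𝟙 y)
      (((u, 𝟙 y) : (x, y) ⟶ (x', y)) ≫ ((u', 𝟙 y) : (x', y) ⟶ (x'', y))) :=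
    Prod.hom_ext (by simp) (by simp)
  rw [h, FunctorToTypes.map_comp_apply]

lemma map_exch {x x' : Xᵒᵖ} {y y' : X} (u : x ⟶ x') (v : y ⟶ y') (z : H.obj (x, y)) :
    H.map ((𝟙 x', v) : (x', y) ⟶ (x', y')) (H.map ((u, 𝟙 y) : (x, y) ⟶ (x', y)) z) =
      H.map ((u, 𝟙 y') : (x, y') ⟶ (x', y')) (H.map ((𝟙 x, v) : (x, y) ⟶ (x, y')) z) := by
  rw [← FunctorToTypes.map_comp_apply, ← FunctorToTypes.map_comp_apply]
  simp

end

/-- The total category of the diagonal extension `i_X H` of `H : Xᵒᵖ × X ⥤ Type`: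
objects over `x` are elements of `H(x,x)`; there is (at most one) morphism over
`λ : x → y` from `a` to `b` exactly when `H(id_x, λ)(a) = H(λ, id_y)(b)`. -/
structure DiagEl {X : Type u} [Category.{u} X] (H : Xᵒᵖ × X ⥤ Type u) : Type u where
  pt : X
  el : H.obj (op pt, pt)

instance {X : Type u} [Category.{u} X] (H : Xᵒᵖ × X ⥤ Type u) :
    Category.{u} (DiagEl H) where
  Hom s t := {l : s.pt ⟶ t.pt //
    H.map ((𝟙 (op s.pt), l) : (op s.pt, s.pt) ⟶ (op s.pt, t.pt)) s.el =
    H.map ((l.op, 𝟙 t.pt) : (op t.pt, t.pt) ⟶ (op s.pt, t.pt)) t.el}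
  id s := ⟨𝟙 s.pt, by simp⟩
  comp {s t r} f g := ⟨f.1 ≫ g.1, by
    rw [mapSnd_comp, f.2, map_exch, g.2,
      show ((f.1 ≫ g.1).op : op r.pt ⟶ op s.pt) = g.1.op ≫ f.1.op from by simp,
      mapFst_comp]⟩
  id_comp := by intros; apply Subtype.ext; simp
  comp_id := by intros; apply Subtype.ext; simp
  assoc := by intros; apply Subtype.ext; simp

/-- The projection of the diagonal extension to `X`. -/
@[simps]
def DiagEl.π {X : Type u} [Category.{u} X] (H : Xᵒᵖ × X ⥤ Type u) : DiagEl H ⥤ X where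
  obj s := s.pt
  map f := f.1
  map_id := by intros; rfl
  map_comp := by intros; rfl

section Aux

variable {X : Type u} [Category.{u} X] {H K : Xᵒᵖ × X ⥤ Type u}

lemma DiagEl.ext' {x : X} (s : DiagEl K) (hs : s.pt = x) :
    (⟨x, cast (by rw [hs]) s.el⟩ : DiagEl K) = s := by
  obtain ⟨p, e⟩ := s; cases hs; rfl

lemma DiagEl.comp_fst {s t r : DiagEl K} (f : s ⟶ t) (g : t ⟶ r) :
    (f ≫ g).1 = f.1 ≫ g.1 := rfl

lemma DiagEl.eqToHom_fst {s t : DiagEl K} (p : s = t) :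
    (eqToHom p).1 = eqToHom (by rw [p]) := by
  cases p; rfl

lemma key {x y : X} (l : x ⟶ y) (s t : DiagEl K) (hs : s.pt = x) (ht : t.pt = y)
    (g : s ⟶ t) (hg : g.1 = eqToHom hs ≫ l ≫ eqToHom ht.symm) :
    K.map ((𝟙 (op x), l) : (op x, x) ⟶ (op x, y)) (cast (by rw [hs]) s.el) =
      K.map ((l.op, 𝟙 y) : (op y, y) ⟶ (op x, y)) (cast (by rw [ht]) t.el) := by
  obtain ⟨px, e⟩ := s
  obtain ⟨py, e'⟩ := t
  cases hs; cases ht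
  have := g.2
  simp only [hg, eqToHom_refl, Category.id_comp, Category.comp_id] at this
  simpa using this

/-- Forward: extract a strong dinatural transformation from a functor over `X`. -/
def toDinat (F : DiagEl H ⥤ DiagEl K) (h : F ⋙ DiagEl.π K = DiagEl.π H)
    (x : X) (a : H.obj (op x, x)) : K.obj (op x, x) :=
  cast (by rw [show (F.obj ⟨x, a⟩).pt = x from Functor.congr_obj h ⟨x, a⟩]) (F.obj ⟨x, a⟩).el

lemma toDinat_spec (F : DiagEl H ⥤ DiagEl K) (h : F ⋙ DiagEl.π K = DiagEl.π H)
    {x y : X} (l : x ⟶ y) (a : H.obj (op x, x)) (b : H.obj (op y, y))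
    (hab : H.map ((𝟙 (op x), l) : (op x, x) ⟶ (op x, y)) a =
      H.map ((l.op, 𝟙 y) : (op y, y) ⟶ (op x, y)) b) :
    K.map ((𝟙 (op x), l) : (op x, x) ⟶ (op x, y)) (toDinat F h x a) =
      K.map ((l.op, 𝟙 y) : (op y, y) ⟶ (op x, y)) (toDinat F h y b) := by
  have hf := Functor.congr_hom h (⟨l, hab⟩ : (⟨x, a⟩ : DiagEl H) ⟶ ⟨y, b⟩)
  exact key l (F.obj ⟨x, a⟩) (F.obj ⟨y, b⟩)
    (Functor.congr_obj h ⟨x, a⟩) (Functor.congr_obj h ⟨y, b⟩)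
    (F.map ⟨l, hab⟩) hf

/-- Backward: build a functor over `X` from a strong dinatural transformation. -/
def ofDinat (α : ∀ x : X, H.obj (op x, x) → K.obj (op x, x))
    (hα : ∀ {x y : X} (l : x ⟶ y) (a : H.obj (op x, x)) (b : H.obj (op y, y)),
      H.map ((𝟙 (op x), l) : (op x, x) ⟶ (op x, y)) a =
        H.map ((l.op, 𝟙 y) : (op y, y) ⟶ (op x, y)) b →
      K.map ((𝟙 (op x), l) : (op x, x) ⟶ (op x, y)) (α x a) =
        K.map ((l.op, 𝟙 y) : (op y, y) ⟶ (op x, y)) (α y b)) :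
    DiagEl H ⥤ DiagEl K where
  obj s := ⟨s.pt, α s.pt s.el⟩
  map {s t} f := ⟨f.1, hα f.1 s.el t.el f.2⟩
  map_id := by intros; rfl
  map_comp := by intros; rfl

end Aux

/-- for `H, K : Xᵒᵖ × X ⥤ Type`, functors over `X` from the diagonal
extension `i_X H` to `i_X K` correspond bijectively to strongly dinatural
transformations from `H` to `K`. -/
theorem overHom_diagEl_equiv_strongDinat (X : Type u) [Category.{u} X]
    (H K : Xᵒᵖ × X ⥤ Type u) :
    Nonempty ({F : DiagEl H ⥤ DiagEl K // F ⋙ DiagEl.π K = DiagEl.π H} ≃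
      {α : ∀ x : X, H.obj (op x, x) → K.obj (op x, x) //
        ∀ {x y : X} (l : x ⟶ y) (a : H.obj (op x, x)) (b : H.obj (op y, y)),
          H.map ((𝟙 (op x), l) : (op x, x) ⟶ (op x, y)) a =
            H.map ((l.op, 𝟙 y) : (op y, y) ⟶ (op x, y)) b →
          K.map ((𝟙 (op x), l) : (op x, x) ⟶ (op x, y)) (α x a) =
            K.map ((l.op, 𝟙 y) : (op y, y) ⟶ (op x, y)) (α y b)}) := by
  refine ⟨{
    toFun := fun F => ⟨toDinat F.1 F.2, fun {x y} l a b hab => toDinat_spec F.1 F.2 l a b hab⟩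
    invFun := fun α => ⟨ofDinat α.1 α.2, rfl⟩
    left_inv := ?_
    right_inv := ?_ }⟩
  · rintro ⟨F, h⟩
    apply Subtype.ext
    dsimp only
    apply CategoryTheory.Functor.ext
    · intro s t f
      apply Subtype.ext
      have hf := Functor.congr_hom h f
      simp only [Functor.comp_map, DiagEl.π_map, DiagEl.comp_fst, DiagEl.eqToHom_fst] at hf
      simp [ofDinat, DiagEl.comp_fst, DiagEl.eqToHom_fst, hf]
      erw [DiagEl.eqToHom_fst, DiagEl.eqToHom_fst]
      have aux : ∀ {a b c d : X} (p : a = b) (q : b = a) (g : a ⟶ c) (r : c = d) (r' : d = c),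
          g = eqToHom p ≫ (eqToHom q ≫ g ≫ eqToHom r) ≫ eqToHom r' := by
        intro a b c d p q g r r'; subst p r; simp
      exact aux _ _ _ _ _
    · intro s
      exact DiagEl.ext' (F.obj s) (Functor.congr_obj h s)
  · rintro ⟨α, hα⟩
    apply Subtype.ext
    funext x a
    simp [toDinat, ofDinat]
    rfl
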